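/- arXiv:2206.12161 — 4 statements merged into one kernel-verified Lean document; each statement's English description precedes it below -/
import Mathlib

section
/- Let φ : ℝ → ℝ be twice continuously differentiable with bounded second derivative. Then for any x, y₁, y₂ ∈ ℝ such that |yᵢ − x| ≤ |φ'(x)| / (4(‖φ''‖_∞ + 1)) for i = 1, 2, one has |φ(y₁) − φ(y₂)| ≥ (1/4)|φ'(x)|·|y₁ − y₂|. -/
theorem second_taylor_lower_bound (φ : ℝ → ℝ) (hφ : ContDiff ℝ 2 φ)
    (hbd : BddAbove (Set.range fun y => |iteratedDeriv 2 φ y|))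
    (x y₁ y₂ : ℝ)
    (h₁ : |y₁ - x| ≤ |deriv φ x| / (4 * ((⨆ y, |iteratedDeriv 2 φ y|) + 1)))
    (h₂ : |y₂ - x| ≤ |deriv φ x| / (4 * ((⨆ y, |iteratedDeriv 2 φ y|) + 1))) :
    |φ y₁ - φ y₂| ≥ (1 / 4) * |deriv φ x| * |y₁ - y₂| := by
  set M : ℝ := ⨆ y, |iteratedDeriv 2 φ y| with hM
  have hM0 : 0 ≤ M := le_ciSup_of_le hbd 0 (abs_nonneg _)
  have hMb : ∀ y, |iteratedDeriv 2 φ y| ≤ M := fun y => le_ciSup hbd y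
  set r : ℝ := |deriv φ x| / (4 * (M + 1)) with hr
  have hr0 : 0 ≤ r := by positivity
  -- differentiability facts
  have h2 : ContDiff ℝ 2 φ := hφ
  have hd : Differentiable ℝ φ ∧ ContDiff ℝ 1 (deriv φ) := by
    have h := (contDiff_succ_iff_deriv (n := 1)).1 (by exact_mod_cast hφ)
    exact ⟨h.1, h.2.2⟩
  have hd2 : Differentiable ℝ (deriv φ) := hd.2.differentiable one_ne_zero
  have hiter : ∀ y, deriv (deriv φ) y = iteratedDeriv 2 φ y := by
    intro y
    rw [iteratedDeriv_succ, iteratedDeriv_one]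
  -- φ' is M-Lipschitz
  have lipφ' : ∀ y, |deriv φ y - deriv φ x| ≤ M * |y - x| := by
    intro y
    have := Convex.norm_image_sub_le_of_norm_hasDerivWithin_le
      (f := deriv φ) (f' := fun z => deriv (deriv φ) z) (s := Set.univ)
      (fun z _ => (hd2 z).hasDerivAt.hasDerivWithinAt)
      (fun z _ => by simp only [Real.norm_eq_abs]; rw [hiter]; exact hMb z)
      convex_univ (Set.mem_univ x) (Set.mem_univ y)
    simpa [Real.norm_eq_abs] using this
  -- key bound on the closed ball
  set s : Set ℝ := Metric.closedBall x r with hs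
  have hy1 : y₁ ∈ s := by simpa [hs, Metric.mem_closedBall, Real.dist_eq] using h₁
  have hy2 : y₂ ∈ s := by simpa [hs, Metric.mem_closedBall, Real.dist_eq] using h₂
  have key : |φ y₁ - deriv φ x * y₁ - (φ y₂ - deriv φ x * y₂)| ≤
      (|deriv φ x| / 4) * |y₁ - y₂| := by
    have := Convex.norm_image_sub_le_of_norm_hasDerivWithin_le
      (f := fun z => φ z - deriv φ x * z)
      (f' := fun z => deriv φ z - deriv φ x) (s := s)
      (fun z _ => by
        have hg : HasDerivAt (fun z => φ z - deriv φ x * z)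
            (deriv φ z - deriv φ x * 1) z :=
          (hd.1 z).hasDerivAt.sub ((hasDerivAt_id z).const_mul (deriv φ x))
        simpa using hg.hasDerivWithinAt)
      (fun z hz => by
        have h1 : |deriv φ z - deriv φ x| ≤ M * |z - x| := lipφ' z
        have h2 : |z - x| ≤ r := by
          simpa [hs, Metric.mem_closedBall, Real.dist_eq] using hz
        have h3 : M * |z - x| ≤ M * r := by nlinarith
        have h4 : M * r ≤ |deriv φ x| / 4 := by
          rw [hr, ← mul_div_assoc, div_le_div_iff₀ (by positivity) (by norm_num)]
          nlinarith [abs_nonneg (deriv φ x)]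
        simpa [Real.norm_eq_abs] using h1.trans (h3.trans h4))
      (convex_closedBall x r) hy2 hy1
    simpa [Real.norm_eq_abs] using this
  have triv : |deriv φ x * (y₁ - y₂)| = |deriv φ x| * |y₁ - y₂| := abs_mul _ _
  have habs : |deriv φ x| * |y₁ - y₂| - |φ y₁ - φ y₂| ≤
      |φ y₁ - deriv φ x * y₁ - (φ y₂ - deriv φ x * y₂)| := by
    have := abs_sub_abs_le_abs_sub (deriv φ x * (y₁ - y₂)) (φ y₁ - φ y₂)
    rw [triv] at this
    calc |deriv φ x| * |y₁ - y₂| - |φ y₁ - φ y₂| ≤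
        |deriv φ x * (y₁ - y₂) - (φ y₁ - φ y₂)| := this
      _ = |φ y₁ - deriv φ x * y₁ - (φ y₂ - deriv φ x * y₂)| := by
          rw [← abs_neg]; ring_nf
  nlinarith [abs_nonneg (deriv φ x), abs_nonneg (y₁ - y₂)]
end

section
/- Let x : [0,1] → ℝ be γ-Hölder continuous and let x⁽ᵐ⁾ be its piecewise linear interpolation on the dyadic partition {k/2^m : k = 0, …, 2^m}. Then for every 0 < β < γ, the β-Hölder norm of x⁽ᵐ⁾ − x is at most 4·(2^{−m})^{γ−β} times the γ-Hölder seminorm of x. -/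
open Set Real

/-- The `m`-th dyadic piecewise linear interpolation of a path `x : ℝ → ℝ`:
it agrees with `x` at the dyadic points `k / 2^m` and is affine in between. -/
noncomputable def dyadicInterp (m : ℕ) (x : ℝ → ℝ) (t : ℝ) : ℝ :=
  x ((⌊t * 2 ^ m⌋ : ℝ) / 2 ^ m) +
    (t * 2 ^ m - (⌊t * 2 ^ m⌋ : ℝ)) *
      (x (((⌊t * 2 ^ m⌋ : ℝ) + 1) / 2 ^ m) - x ((⌊t * 2 ^ m⌋ : ℝ) / 2 ^ m))


private lemma interp_seg (x : ℝ → ℝ) (γ β K : ℝ) (hK : 0 ≤ K)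
    (hβ : 0 < β) (hβ1 : β ≤ 1) (hβγ : β < γ)
    (hx : ∀ s ∈ Set.Icc (0:ℝ) 1, ∀ t ∈ Set.Icc (0:ℝ) 1, |x t - x s| ≤ K * |t - s| ^ γ)
    (m : ℕ) (k : ℝ) (hk0 : (0:ℝ) ≤ k) (hk1 : k + 1 ≤ 2^m)
    (s t : ℝ) (hs : k/2^m ≤ s) (hst : s ≤ t) (ht : t ≤ (k+1)/2^m) :
    |(x (k/2^m) + (t * 2^m - k) * (x ((k+1)/2^m) - x (k/2^m)) - x t)
      - (x (k/2^m) + (s * 2^m - k) * (x ((k+1)/2^m) - x (k/2^m)) - x s)| ≤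
      2 * K * (((2:ℝ)^m)⁻¹) ^ (γ - β) * (t - s) ^ β := by
  set n : ℝ := 2^m with hn_def
  have hn : (0:ℝ) < n := by positivity
  have hH : (0:ℝ) < n⁻¹ := by positivity
  have hγ : 0 < γ := lt_trans hβ hβγ
  -- grid points and s, t lie in [0,1]
  have ha : k/n ∈ Icc (0:ℝ) 1 :=
    ⟨by positivity, by rw [div_le_one hn]; linarith⟩
  have hb : (k+1)/n ∈ Icc (0:ℝ) 1 :=
    ⟨by positivity, by rw [div_le_one hn]; linarith⟩
  have hsI : s ∈ Icc (0:ℝ) 1 := ⟨le_trans ha.1 hs, le_trans hst (le_trans ht hb.2)⟩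
  have htI : t ∈ Icc (0:ℝ) 1 := ⟨le_trans hsI.1 hst, le_trans ht hb.2⟩
  have hts0 : 0 ≤ t - s := by linarith
  have htsH : t - s ≤ n⁻¹ := by
    have : (k+1)/n - k/n = n⁻¹ := by field_simp; ring
    linarith
  -- the increment of the grid values
  have hΔ : |x ((k+1)/n) - x (k/n)| ≤ K * (n⁻¹) ^ γ := by
    have := hx _ ha _ hb
    have e : |(k+1)/n - k/n| = n⁻¹ := by
      have e2 : (k+1)/n - k/n = n⁻¹ := by field_simp; ring
      rw [e2, abs_of_nonneg hH.le]
    rwa [e] at this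
  rcases eq_or_lt_of_le hst with rfl | hlt
  · rw [sub_self, abs_zero, sub_self, Real.zero_rpow hβ.ne', mul_zero]
  have hr : 0 < t - s := by linarith
  have key : |(x (k/n) + (t * n - k) * (x ((k+1)/n) - x (k/n)) - x t)
      - (x (k/n) + (s * n - k) * (x ((k+1)/n) - x (k/n)) - x s)|
      ≤ (t-s) * n * |x ((k+1)/n) - x (k/n)| + |x t - x s| := by
    have e : (x (k/n) + (t * n - k) * (x ((k+1)/n) - x (k/n)) - x t)
      - (x (k/n) + (s * n - k) * (x ((k+1)/n) - x (k/n)) - x s)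
      = ((t-s) * n) * (x ((k+1)/n) - x (k/n)) - (x t - x s) := by ring
    rw [e]
    refine le_trans (abs_sub _ _) ?_
    rw [abs_mul, abs_of_nonneg (by positivity : (0:ℝ) ≤ (t-s)*n)]
  have term1 : (t-s) * n * |x ((k+1)/n) - x (k/n)| ≤ K * (n⁻¹) ^ (γ - β) * (t-s) ^ β := by
    have h1 : (t-s) * n * |x ((k+1)/n) - x (k/n)| ≤ (t-s) * n * (K * (n⁻¹) ^ γ) := by
      gcongr
    refine le_trans h1 ?_
    have hsplit : t - s = (t-s) ^ β * (t-s) ^ (1-β) := by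
      rw [← Real.rpow_add hr]; norm_num
    have hmono : (t-s) ^ (1-β) ≤ (n⁻¹) ^ (1-β) :=
      Real.rpow_le_rpow hr.le htsH (by linarith)
    have hpow : (n⁻¹) ^ (1-β) * (n * (n⁻¹) ^ γ) = (n⁻¹) ^ (γ - β) := by
      have e1 : n⁻¹ ^ (1-β) * n⁻¹ ^ γ = n⁻¹ ^ (γ-β) * n⁻¹ := by
        rw [← Real.rpow_add hH, ← Real.rpow_add_one hH.ne']
        ring_nf
      calc (n⁻¹) ^ (1-β) * (n * (n⁻¹) ^ γ) = n * (n⁻¹ ^ (1-β) * n⁻¹ ^ γ) := by ring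
        _ = n * (n⁻¹ ^ (γ-β) * n⁻¹) := by rw [e1]
        _ = (n⁻¹) ^ (γ - β) := by field_simp
    calc (t-s) * n * (K * (n⁻¹) ^ γ)
        = K * ((t-s) ^ β * ((t-s) ^ (1-β) * (n * (n⁻¹) ^ γ))) := by
          conv_lhs => rw [hsplit]
          ring
      _ ≤ K * ((t-s) ^ β * ((n⁻¹) ^ (1-β) * (n * (n⁻¹) ^ γ))) := by
          have hnn : 0 ≤ n * (n⁻¹) ^ γ := by positivity
          gcongr
      _ = K * (n⁻¹) ^ (γ - β) * (t-s) ^ β := by rw [hpow]; ring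
  have term2 : |x t - x s| ≤ K * (n⁻¹) ^ (γ - β) * (t-s) ^ β := by
    have h1 := hx _ hsI _ htI
    rw [abs_of_nonneg hts0] at h1
    refine le_trans h1 ?_
    have hsplit : (t-s) ^ γ = (t-s) ^ (γ-β) * (t-s) ^ β := by
      rw [← Real.rpow_add hr]; ring_nf
    have hmono : (t-s) ^ (γ-β) ≤ (n⁻¹) ^ (γ-β) :=
      Real.rpow_le_rpow hr.le htsH (by linarith)
    rw [hsplit]
    calc K * ((t-s) ^ (γ-β) * (t-s) ^ β) ≤ K * ((n⁻¹) ^ (γ-β) * (t-s) ^ β) := by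
          gcongr
      _ = K * (n⁻¹) ^ (γ-β) * (t-s) ^ β := by ring
  calc _ ≤ (t-s) * n * |x ((k+1)/n) - x (k/n)| + |x t - x s| := key
    _ ≤ K * (n⁻¹) ^ (γ - β) * (t-s) ^ β + K * (n⁻¹) ^ (γ - β) * (t-s) ^ β := by
        exact add_le_add term1 term2
    _ = 2 * K * (n⁻¹) ^ (γ - β) * (t - s) ^ β := by ring

private lemma interp_pointwise (x : ℝ → ℝ) (γ K : ℝ) (hK : 0 ≤ K) (hγ : 0 < γ)
    (hx : ∀ s ∈ Set.Icc (0:ℝ) 1, ∀ t ∈ Set.Icc (0:ℝ) 1, |x t - x s| ≤ K * |t - s| ^ γ)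
    (m : ℕ) (t : ℝ) (ht : t ∈ Set.Icc (0:ℝ) 1) :
    |dyadicInterp m x t - x t| ≤ K * (((2:ℝ)^m)⁻¹) ^ γ := by
  have hn : (0:ℝ) < 2^m := by positivity
  have hH : (0:ℝ) < ((2:ℝ)^m)⁻¹ := by positivity
  have htn : 0 ≤ t * 2^m := mul_nonneg ht.1 hn.le
  have hk0 : (0:ℤ) ≤ ⌊t * (2:ℝ)^m⌋ := Int.floor_nonneg.mpr htn
  have hk0' : (0:ℝ) ≤ (⌊t * (2:ℝ)^m⌋ : ℝ) := by exact_mod_cast hk0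
  have hkle : ((⌊t * (2:ℝ)^m⌋:ℤ) : ℝ) ≤ t * 2^m := Int.floor_le _
  have hklt : t * 2^m < (⌊t * (2:ℝ)^m⌋ : ℝ) + 1 := Int.lt_floor_add_one _
  set k : ℤ := ⌊t * (2:ℝ)^m⌋ with hk_def
  by_cases hcase : (k:ℝ) + 1 ≤ 2^m
  · have ha : (k:ℝ)/2^m ∈ Icc (0:ℝ) 1 :=
      ⟨div_nonneg hk0' hn.le, by rw [div_le_one hn]; linarith⟩
    have hb : ((k:ℝ)+1)/2^m ∈ Icc (0:ℝ) 1 :=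
      ⟨by positivity, by rw [div_le_one hn]; linarith⟩
    have hle1 : (k:ℝ)/2^m ≤ t := by rw [div_le_iff₀ hn]; exact hkle
    have hadist : |(k:ℝ)/2^m - t| ≤ ((2:ℝ)^m)⁻¹ := by
      rw [abs_sub_comm, abs_of_nonneg (by linarith)]
      have e2 : t - (k:ℝ)/2^m = (t*2^m - (k:ℝ))/2^m := by field_simp
      rw [e2, ← one_div]
      gcongr
      linarith
    have hbdist : |((k:ℝ)+1)/2^m - t| ≤ ((2:ℝ)^m)⁻¹ := by
      have hge : t ≤ ((k:ℝ)+1)/2^m := by rw [le_div_iff₀ hn]; linarith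
      rw [abs_of_nonneg (by linarith)]
      have e2 : ((k:ℝ)+1)/2^m - t = ((k:ℝ)+1 - t*2^m)/2^m := by field_simp
      rw [e2, ← one_div]
      gcongr
      linarith
    have bound1 : |x ((k:ℝ)/2^m) - x t| ≤ K * (((2:ℝ)^m)⁻¹) ^ γ := by
      refine le_trans (hx _ ht _ ha) ?_
      gcongr
    have bound2 : |x (((k:ℝ)+1)/2^m) - x t| ≤ K * (((2:ℝ)^m)⁻¹) ^ γ := by
      refine le_trans (hx _ ht _ hb) ?_
      gcongr
    have e : dyadicInterp m x t - x t
        = (1 - (t * 2^m - (k:ℝ))) * (x ((k:ℝ)/2^m) - x t)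
          + (t * 2^m - (k:ℝ)) * (x (((k:ℝ)+1)/2^m) - x t) := by
      simp only [dyadicInterp, ← hk_def]; ring
    rw [e]
    have h1 : 0 ≤ 1 - (t * 2^m - (k:ℝ)) := by linarith
    have h2 : 0 ≤ t * 2^m - (k:ℝ) := by linarith
    calc |(1 - (t * 2^m - (k:ℝ))) * (x ((k:ℝ)/2^m) - x t)
          + (t * 2^m - (k:ℝ)) * (x (((k:ℝ)+1)/2^m) - x t)|
        ≤ (1 - (t * 2^m - (k:ℝ))) * |x ((k:ℝ)/2^m) - x t|
          + (t * 2^m - (k:ℝ)) * |x (((k:ℝ)+1)/2^m) - x t| := by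
          refine le_trans (abs_add_le _ _) ?_
          rw [abs_mul, abs_mul, abs_of_nonneg h1, abs_of_nonneg h2]
      _ ≤ (1 - (t * 2^m - (k:ℝ))) * (K * (((2:ℝ)^m)⁻¹) ^ γ)
          + (t * 2^m - (k:ℝ)) * (K * (((2:ℝ)^m)⁻¹) ^ γ) := by gcongr
      _ = K * (((2:ℝ)^m)⁻¹) ^ γ := by ring
  · push_neg at hcase
    have hkZ : (2^m : ℤ) ≤ k := by
      have h2 : (2^m : ℤ) < k + 1 := by exact_mod_cast (by push_cast; exact hcase : ((2^m : ℤ) : ℝ) < (k:ℝ) + 1)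
      linarith
    have hkn : (2:ℝ)^m ≤ (k:ℝ) := by exact_mod_cast hkZ
    have ht1 : t * 2^m = 2^m := by nlinarith [ht.2]
    have hkeq : (k:ℝ) = 2^m := by
      have : (k:ℝ) ≤ 2^m := by rw [← ht1]; exact hkle
      linarith
    have e : dyadicInterp m x t - x t = 0 := by
      have htt : t = 1 := mul_right_cancel₀ hn.ne' (by rw [ht1, one_mul])
      simp only [dyadicInterp, ← hk_def]
      rw [hkeq, htt, div_self hn.ne', one_mul, sub_self, zero_mul, add_zero, sub_self]
    rw [e, abs_zero]
    positivity

private lemma holder_const (x : ℝ → ℝ) (γ K : ℝ) (hγ : 1 < γ)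
    (hx : ∀ s ∈ Set.Icc (0:ℝ) 1, ∀ t ∈ Set.Icc (0:ℝ) 1, |x t - x s| ≤ K * |t - s| ^ γ)
    (a : ℝ) (ha : a ∈ Set.Icc (0:ℝ) 1) (b : ℝ) (hb : b ∈ Set.Icc (0:ℝ) 1) :
    x a = x b := by
  suffices h : ∀ a ∈ Set.Icc (0:ℝ) 1, ∀ b ∈ Set.Icc (0:ℝ) 1, a ≤ b → x a = x b by
    rcases le_total a b with hab | hab
    · exact h a ha b hb hab
    · exact (h b hb a ha hab).symm
  clear ha hb a b
  intro a ha b hb hab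
  set c : ℝ := (2:ℝ) ^ (1 - γ) with hc_def
  have hc0 : 0 < c := Real.rpow_pos_of_pos two_pos _
  have hc1 : c < 1 := Real.rpow_lt_one_of_one_lt_of_neg one_lt_two (by linarith)
  have claim : ∀ j : ℕ, ∀ u ∈ Set.Icc (0:ℝ) 1, ∀ v ∈ Set.Icc (0:ℝ) 1, u ≤ v →
      |x v - x u| ≤ K * (v - u) ^ γ * c ^ j := by
    intro j
    induction j with
    | zero =>
      intro u hu v hv huv
      simpa [abs_of_nonneg (sub_nonneg.mpr huv)] using hx u hu v hv
    | succ j ih =>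
      intro u hu v hv huv
      set w := (u + v) / 2 with hw
      obtain ⟨hu1, hu2⟩ := hu
      obtain ⟨hv1, hv2⟩ := hv
      have hw01 : w ∈ Set.Icc (0:ℝ) 1 := ⟨by rw [hw]; linarith, by rw [hw]; linarith⟩
      have huw : u ≤ w := by rw [hw]; linarith
      have hwv : w ≤ v := by rw [hw]; linarith
      have h1 := ih u ⟨hu1, hu2⟩ w hw01 huw
      have h2 := ih w hw01 v ⟨hv1, hv2⟩ hwv
      have habs : |x v - x u| ≤ |x v - x w| + |x w - x u| := by
        have e : x v - x u = (x v - x w) + (x w - x u) := by ring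
        rw [e]; exact abs_add_le _ _
      have hwu : w - u = (v - u)/2 := by rw [hw]; ring
      have hvw : v - w = (v - u)/2 := by rw [hw]; ring
      rw [hwu] at h1
      rw [hvw] at h2
      have hhalf : ((v - u)/2) ^ γ = (v - u) ^ γ / 2 ^ γ :=
        Real.div_rpow (by linarith) (by norm_num) γ
      have h2γ : (0:ℝ) < (2:ℝ) ^ γ := Real.rpow_pos_of_pos two_pos _
      have hc_eq : c = 2 / 2 ^ γ := by
        rw [hc_def, Real.rpow_sub two_pos, Real.rpow_one]
      calc |x v - x u| ≤ |x v - x w| + |x w - x u| := habs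
        _ ≤ K * ((v-u)/2) ^ γ * c ^ j + K * ((v-u)/2) ^ γ * c ^ j := add_le_add h2 h1
        _ = K * (v-u) ^ γ * c ^ (j+1) := by
            rw [hhalf, hc_eq, pow_succ]
            field_simp
            ring
  have hlim : Filter.Tendsto (fun j : ℕ => K * (b - a) ^ γ * c ^ j) Filter.atTop (nhds 0) := by
    rw [show (0:ℝ) = K * (b-a)^γ * 0 by ring]
    exact (tendsto_pow_atTop_nhds_zero_of_lt_one hc0.le hc1).const_mul _
  have hle : |x b - x a| ≤ 0 :=
    ge_of_tendsto hlim (Filter.Eventually.of_forall fun j => claim j a ha b hb hab)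
  have h0 : x b - x a = 0 := abs_eq_zero.mp (le_antisymm hle (abs_nonneg _))
  linarith


private lemma main_le (x : ℝ → ℝ) (γ β K : ℝ) (hK : 0 ≤ K)
    (hβ : 0 < β) (hβγ : β < γ)
    (hx : ∀ s ∈ Set.Icc (0 : ℝ) 1, ∀ t ∈ Set.Icc (0 : ℝ) 1,
      |x t - x s| ≤ K * |t - s| ^ γ)
    (m : ℕ) :
    ∀ s ∈ Set.Icc (0 : ℝ) 1, ∀ t ∈ Set.Icc (0 : ℝ) 1, s ≤ t →
      |(dyadicInterp m x t - x t) - (dyadicInterp m x s - x s)| ≤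
        4 * (((2:ℝ)^m)⁻¹) ^ (γ - β) * K * (t - s) ^ β := by
  intro s hs t ht hst
  have hn : (0:ℝ) < 2^m := by positivity
  have hH : (0:ℝ) < ((2:ℝ)^m)⁻¹ := by positivity
  have hγ : 0 < γ := lt_trans hβ hβγ
  have hA0 : (0:ℝ) < (((2:ℝ)^m)⁻¹) ^ (γ - β) := Real.rpow_pos_of_pos hH _
  rcases eq_or_lt_of_le hst with rfl | hlt
  · rw [sub_self, abs_zero, sub_self, Real.zero_rpow hβ.ne', mul_zero]
  have htsβ : (0:ℝ) ≤ (t - s) ^ β := Real.rpow_nonneg (by linarith) _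
  rcases le_or_gt β 1 with hβ1 | hβ1
  swap
  · -- β > 1 : x is constant on [0,1]
    have hγ1 : 1 < γ := lt_trans hβ1 hβγ
    have hx0 : ∀ u ∈ Set.Icc (0:ℝ) 1, ∀ v ∈ Set.Icc (0:ℝ) 1, |x v - x u| ≤ 0 * |v - u| ^ γ := by
      intro u hu v hv
      rw [holder_const x γ K hγ1 hx u hu v hv, sub_self, abs_zero, zero_mul]
    have h1 := interp_pointwise x γ 0 le_rfl hγ hx0 m s hs
    have h2 := interp_pointwise x γ 0 le_rfl hγ hx0 m t ht
    rw [zero_mul] at h1 h2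
    have e1 : dyadicInterp m x s - x s = 0 := abs_eq_zero.mp (le_antisymm h1 (abs_nonneg _))
    have e2 : dyadicInterp m x t - x t = 0 := abs_eq_zero.mp (le_antisymm h2 (abs_nonneg _))
    rw [e1, e2, sub_zero, abs_zero]
    exact mul_nonneg (by positivity) htsβ
  -- now β ≤ 1
  rcases le_or_gt (((2:ℝ)^m)⁻¹) (t - s) with hcase | hcase
  · -- far apart: use the pointwise bound
    have h1 := interp_pointwise x γ K hK hγ hx m s hs
    have h2 := interp_pointwise x γ K hK hγ hx m t ht
    have hsplit : (((2:ℝ)^m)⁻¹) ^ γ = (((2:ℝ)^m)⁻¹) ^ (γ - β) * (((2:ℝ)^m)⁻¹) ^ β := by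
      rw [← Real.rpow_add hH]; ring_nf
    have hmono : (((2:ℝ)^m)⁻¹) ^ β ≤ (t - s) ^ β :=
      Real.rpow_le_rpow hH.le hcase hβ.le
    have hX : K * (((2:ℝ)^m)⁻¹) ^ (γ - β) * (t-s) ^ β ≥ 0 := by positivity
    calc |(dyadicInterp m x t - x t) - (dyadicInterp m x s - x s)|
        ≤ |dyadicInterp m x t - x t| + |dyadicInterp m x s - x s| := abs_sub _ _
      _ ≤ K * (((2:ℝ)^m)⁻¹) ^ γ + K * (((2:ℝ)^m)⁻¹) ^ γ := add_le_add h2 h1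
      _ = 2 * (K * ((((2:ℝ)^m)⁻¹) ^ (γ - β) * (((2:ℝ)^m)⁻¹) ^ β)) := by rw [hsplit]; ring
      _ ≤ 2 * (K * ((((2:ℝ)^m)⁻¹) ^ (γ - β) * (t - s) ^ β)) := by gcongr
      _ ≤ 4 * (((2:ℝ)^m)⁻¹) ^ (γ - β) * K * (t - s) ^ β := by nlinarith [hX]
  · -- close together
    have hsn : (0:ℝ) ≤ s * 2^m := mul_nonneg hs.1 hn.le
    have hk0 : (0:ℝ) ≤ (⌊s * (2:ℝ)^m⌋ : ℝ) := by
      have : (0:ℤ) ≤ ⌊s * (2:ℝ)^m⌋ := Int.floor_nonneg.mpr hsn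
      exact_mod_cast this
    have hskle : ((⌊s * (2:ℝ)^m⌋ : ℤ) : ℝ) ≤ s * 2^m := Int.floor_le _
    have hsklt : s * 2^m < (⌊s * (2:ℝ)^m⌋ : ℝ) + 1 := Int.lt_floor_add_one _
    have hs1 : s < 1 := lt_of_lt_of_le hlt ht.2
    have hk1 : (⌊s * (2:ℝ)^m⌋ : ℝ) + 1 ≤ 2^m := by
      have hlt' : (⌊s * (2:ℝ)^m⌋ : ℤ) < 2^m := by
        have : ((⌊s * (2:ℝ)^m⌋ : ℤ) : ℝ) < ((2^m : ℤ) : ℝ) := by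
          push_cast
          nlinarith [hs.1]
        exact_mod_cast this
      have : (⌊s * (2:ℝ)^m⌋ : ℤ) + 1 ≤ 2^m := hlt'
      calc (⌊s * (2:ℝ)^m⌋ : ℝ) + 1 = (((⌊s * (2:ℝ)^m⌋ : ℤ) + 1 : ℤ) : ℝ) := by push_cast; ring
        _ ≤ ((2^m : ℤ) : ℝ) := by exact_mod_cast this
        _ = 2^m := by push_cast; ring
    have hs_div : (⌊s * (2:ℝ)^m⌋ : ℝ) / 2^m ≤ s := by
      rw [div_le_iff₀ hn]; exact hskle
    have hswap : (t - s) * 2^m < 1 := by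
      have := mul_lt_mul_of_pos_right hcase hn
      rwa [inv_mul_cancel₀ hn.ne'] at this
    have h24 : ∀ z : ℝ, 0 ≤ z → 2 * K * (((2:ℝ)^m)⁻¹) ^ (γ - β) * z ≤
        4 * (((2:ℝ)^m)⁻¹) ^ (γ - β) * K * z := by
      intro z hz
      nlinarith [mul_nonneg (mul_nonneg hK hA0.le) hz]
    by_cases hft : ⌊t * (2:ℝ)^m⌋ = ⌊s * (2:ℝ)^m⌋
    · -- same dyadic interval
      have ht_up : t * 2^m < (⌊s * (2:ℝ)^m⌋ : ℝ) + 1 := by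
        have := Int.lt_floor_add_one (t * (2:ℝ)^m)
        rwa [hft] at this
      have main := interp_seg x γ β K hK hβ hβ1 hβγ hx m ((⌊s * (2:ℝ)^m⌋ : ℤ) : ℝ)
        hk0 hk1 s t hs_div hst (by rw [le_div_iff₀ hn]; exact ht_up.le)
      have egoal : (dyadicInterp m x t - x t) - (dyadicInterp m x s - x s)
          = (x ((⌊s * (2:ℝ)^m⌋ : ℝ)/2^m) + (t * 2^m - (⌊s * (2:ℝ)^m⌋ : ℝ)) *
              (x (((⌊s * (2:ℝ)^m⌋ : ℝ)+1)/2^m) - x ((⌊s * (2:ℝ)^m⌋ : ℝ)/2^m)) - x t)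
            - (x ((⌊s * (2:ℝ)^m⌋ : ℝ)/2^m) + (s * 2^m - (⌊s * (2:ℝ)^m⌋ : ℝ)) *
              (x (((⌊s * (2:ℝ)^m⌋ : ℝ)+1)/2^m) - x ((⌊s * (2:ℝ)^m⌋ : ℝ)/2^m)) - x s) := by
        simp only [dyadicInterp, hft]
      rw [egoal]
      exact le_trans main (h24 _ htsβ)
    · -- adjacent dyadic intervals
      have hmono' : ⌊s * (2:ℝ)^m⌋ ≤ ⌊t * (2:ℝ)^m⌋ :=
        Int.floor_le_floor (by nlinarith)
      have hup : ⌊t * (2:ℝ)^m⌋ ≤ ⌊s * (2:ℝ)^m⌋ + 1 := by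
        have h1 : ((⌊t * (2:ℝ)^m⌋ : ℤ) : ℝ) ≤ t * 2^m := Int.floor_le _
        have h2 : ((⌊t * (2:ℝ)^m⌋ : ℤ) : ℝ) < (⌊s * (2:ℝ)^m⌋ : ℝ) + 2 := by nlinarith
        have : (⌊t * (2:ℝ)^m⌋ : ℤ) < ⌊s * (2:ℝ)^m⌋ + 2 := by exact_mod_cast h2
        omega
      have h_e : ⌊t * (2:ℝ)^m⌋ = ⌊s * (2:ℝ)^m⌋ + 1 := by omega
      have hfl : ((⌊t * (2:ℝ)^m⌋ : ℤ) : ℝ) = (⌊s * (2:ℝ)^m⌋ : ℝ) + 1 := by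
        rw [h_e]; push_cast; ring
      have hktle : (⌊s * (2:ℝ)^m⌋ : ℝ) + 1 ≤ t * 2^m := by
        rw [← hfl]; exact Int.floor_le _
      have hsu : s ≤ ((⌊s * (2:ℝ)^m⌋ : ℝ) + 1) / 2^m := by
        rw [le_div_iff₀ hn]; exact hsklt.le
      have hut : ((⌊s * (2:ℝ)^m⌋ : ℝ) + 1) / 2^m ≤ t := by
        rw [div_le_iff₀ hn]; exact hktle
      have hu2m : ((⌊s * (2:ℝ)^m⌋ : ℝ) + 1) / 2^m * 2^m = (⌊s * (2:ℝ)^m⌋ : ℝ) + 1 := by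
        field_simp
      -- bound |d s|
      have A := interp_seg x γ β K hK hβ hβ1 hβγ hx m ((⌊s * (2:ℝ)^m⌋ : ℤ) : ℝ)
        hk0 hk1 s (((⌊s * (2:ℝ)^m⌋ : ℝ) + 1) / 2^m) hs_div hsu le_rfl
      rw [hu2m] at A
      have ering : x ((⌊s * (2:ℝ)^m⌋ : ℝ)/2^m) + ((⌊s * (2:ℝ)^m⌋ : ℝ) + 1 - (⌊s * (2:ℝ)^m⌋ : ℝ)) *
          (x (((⌊s * (2:ℝ)^m⌋ : ℝ)+1)/2^m) - x ((⌊s * (2:ℝ)^m⌋ : ℝ)/2^m))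
          - x (((⌊s * (2:ℝ)^m⌋ : ℝ)+1)/2^m) = 0 := by ring
      rw [ering, zero_sub, abs_neg] at A
      have eds : dyadicInterp m x s = x ((⌊s * (2:ℝ)^m⌋ : ℝ)/2^m) + (s * 2^m - (⌊s * (2:ℝ)^m⌋ : ℝ)) *
          (x (((⌊s * (2:ℝ)^m⌋ : ℝ)+1)/2^m) - x ((⌊s * (2:ℝ)^m⌋ : ℝ)/2^m)) := by
        simp only [dyadicInterp]
      rw [← eds] at A
      have hAs : |dyadicInterp m x s - x s| ≤ 2 * K * (((2:ℝ)^m)⁻¹) ^ (γ - β) * (t - s) ^ β := by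
        refine le_trans A ?_
        exact mul_le_mul_of_nonneg_left
          (Real.rpow_le_rpow (by linarith) (by linarith) hβ.le) (by positivity)
      -- bound |d t|
      have hdt : |dyadicInterp m x t - x t| ≤ 2 * K * (((2:ℝ)^m)⁻¹) ^ (γ - β) * (t - s) ^ β := by
        rcases eq_or_lt_of_le hut with heq | hlt2
        · -- t is the common grid point
          have ht2m : t * 2^m = (⌊s * (2:ℝ)^m⌋ : ℝ) + 1 := by
            rw [← heq]; exact hu2m
          have edt : dyadicInterp m x t - x t = 0 := by
            simp only [dyadicInterp]
            rw [hfl, ht2m, sub_self, zero_mul, add_zero, heq, sub_self]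
          rw [edt, abs_zero]
          positivity
        · have hk2 : (⌊s * (2:ℝ)^m⌋ : ℝ) + 1 + 1 ≤ 2^m := by
            by_contra hcon
            push_neg at hcon
            have hgeZ : (2^m : ℤ) ≤ ⌊s * (2:ℝ)^m⌋ + 1 := by
              have : ((2^m:ℤ):ℝ) < (⌊s * (2:ℝ)^m⌋ : ℝ) + 1 + 1 := by push_cast; linarith
              have h2 : ((2^m:ℤ):ℝ) < ((⌊s * (2:ℝ)^m⌋ + 1 + 1 : ℤ) : ℝ) := by push_cast; push_cast at this; linarith
              have h3 : (2^m:ℤ) < ⌊s * (2:ℝ)^m⌋ + 1 + 1 := by exact_mod_cast h2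
              omega
            have hge : (2:ℝ)^m ≤ (⌊s * (2:ℝ)^m⌋ : ℝ) + 1 := by
              have : ((2^m:ℤ):ℝ) ≤ ((⌊s * (2:ℝ)^m⌋ + 1 : ℤ) : ℝ) := by exact_mod_cast hgeZ
              push_cast at this; linarith
            have hu1 : (1:ℝ) ≤ ((⌊s * (2:ℝ)^m⌋ : ℝ) + 1) / 2^m := by
              rw [le_div_iff₀ hn]; linarith
            have : t > 1 := lt_of_le_of_lt hu1 hlt2
            linarith [ht.2]
          have B := interp_seg x γ β K hK hβ hβ1 hβγ hx m ((⌊s * (2:ℝ)^m⌋ : ℝ) + 1)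
            (by linarith) hk2 (((⌊s * (2:ℝ)^m⌋ : ℝ) + 1) / 2^m) t le_rfl hlt2.le
            (by rw [le_div_iff₀ hn]
                have := Int.lt_floor_add_one (t * (2:ℝ)^m)
                rw [hfl] at this
                linarith)
          rw [hu2m, sub_self, zero_mul, add_zero, sub_self, sub_zero] at B
          have edt : dyadicInterp m x t - x t
              = x (((⌊s * (2:ℝ)^m⌋ : ℝ) + 1)/2^m) + (t * 2^m - ((⌊s * (2:ℝ)^m⌋ : ℝ) + 1)) *
                (x (((⌊s * (2:ℝ)^m⌋ : ℝ) + 1 + 1)/2^m) - x (((⌊s * (2:ℝ)^m⌋ : ℝ) + 1)/2^m)) - x t := by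
            simp only [dyadicInterp]
            rw [hfl]
          rw [edt]
          refine le_trans B ?_
          exact mul_le_mul_of_nonneg_left
            (Real.rpow_le_rpow (by linarith) (by linarith) hβ.le) (by positivity)
      calc |(dyadicInterp m x t - x t) - (dyadicInterp m x s - x s)|
          ≤ |dyadicInterp m x t - x t| + |dyadicInterp m x s - x s| := abs_sub _ _
        _ ≤ 2 * K * (((2:ℝ)^m)⁻¹) ^ (γ - β) * (t - s) ^ β
            + 2 * K * (((2:ℝ)^m)⁻¹) ^ (γ - β) * (t - s) ^ β := add_le_add hdt hAs
        _ = 4 * (((2:ℝ)^m)⁻¹) ^ (γ - β) * K * (t - s) ^ β := by ring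

theorem dyadic_interp_holder_error (x : ℝ → ℝ) (γ β K : ℝ) (hK : 0 ≤ K)
    (hβ : 0 < β) (hβγ : β < γ)
    (hx : ∀ s ∈ Set.Icc (0 : ℝ) 1, ∀ t ∈ Set.Icc (0 : ℝ) 1,
      |x t - x s| ≤ K * |t - s| ^ γ)
    (m : ℕ) :
    ∀ s ∈ Set.Icc (0 : ℝ) 1, ∀ t ∈ Set.Icc (0 : ℝ) 1,
      |(dyadicInterp m x t - x t) - (dyadicInterp m x s - x s)| ≤
        4 * ((2 : ℝ) ^ (-(m : ℝ))) ^ (γ - β) * K * |t - s| ^ β := by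
  have hbase : (2 : ℝ) ^ (-(m : ℝ)) = ((2:ℝ)^m)⁻¹ := by
    rw [Real.rpow_neg (by norm_num : (0:ℝ) ≤ 2), Real.rpow_natCast]
  rw [hbase]
  intro s hs t ht
  rcases le_total s t with hst | hst
  · rw [abs_of_nonneg (by linarith : (0:ℝ) ≤ t - s)]
    exact main_le x γ β K hK hβ hβγ hx m s hs t ht hst
  · rw [abs_sub_comm, abs_sub_comm t s, abs_of_nonneg (by linarith : (0:ℝ) ≤ s - t)]
    exact main_le x γ β K hK hβ hβγ hx m t ht s hs hst
end

section
/- Let α ∈ (0,1), M a positive integer, ε = 2^{−M}. For every u ∈ (0, ε), letting K ≥ M be the unique integer with 2^{−K−1} ≤ u < 2^{−K}, one has Σ_{n≥M} 2^{−2nα} sin²(2^{n−1} π u) ≥ 4^{α−1} u^{2α}. -/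
open Real

set_option maxHeartbeats 1000000 in
theorem weierstrass_tail_sum_lower (α : ℝ) (hα : α ∈ Set.Ioo (0 : ℝ) 1)
    (M : ℕ) (hM : 1 ≤ M) (ε : ℝ) (hε : ε = (2 : ℝ) ^ (-(M : ℝ)))
    (u : ℝ) (hu : u ∈ Set.Ioo 0 ε)
    (K : ℕ) (hKM : M ≤ K)
    (hK₁ : (2 : ℝ) ^ (-((K : ℝ) + 1)) ≤ u) (hK₂ : u < (2 : ℝ) ^ (-(K : ℝ))) :
    (∑' n : ℕ, (2 : ℝ) ^ (-2 * ((M + n : ℕ) : ℝ) * α) *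
        Real.sin ((2 : ℝ) ^ (M + n) * π * u / 2) ^ 2) ≥
      (4 : ℝ) ^ (α - 1) * u ^ (2 * α) := by
  obtain ⟨hu0, huε⟩ := hu
  obtain ⟨hα0, hα1⟩ := hα
  set f : ℕ → ℝ := fun n => (2 : ℝ) ^ (-2 * ((M + n : ℕ) : ℝ) * α) *
      Real.sin ((2 : ℝ) ^ (M + n) * π * u / 2) ^ 2 with hf
  have hpos : ∀ n, 0 ≤ f n := fun n =>
    mul_nonneg (rpow_nonneg (by norm_num) _) (sq_nonneg _)
  have hr0 : (0:ℝ) ≤ (2:ℝ) ^ (-2*α) := rpow_nonneg (by norm_num) _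
  have hr1 : (2:ℝ) ^ (-2*α) < 1 := by
    apply rpow_lt_one_of_one_lt_of_neg (by norm_num)
    nlinarith
  have hsummable : Summable f := by
    refine Summable.of_nonneg_of_le hpos (fun n => ?_)
      (((summable_geometric_of_lt_one hr0 hr1).mul_left (((2:ℝ)^(-2*α))^M)))
    have h1 : (2:ℝ) ^ (-2 * ((M + n : ℕ) : ℝ) * α) = ((2:ℝ)^(-2*α))^M * ((2:ℝ)^(-2*α))^n := by
      rw [← pow_add, ← Real.rpow_natCast ((2:ℝ)^(-2*α)) (M+n),
        ← Real.rpow_mul (by norm_num)]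
      push_cast
      ring_nf
    calc f n ≤ (2:ℝ) ^ (-2 * ((M + n : ℕ) : ℝ) * α) * 1 := by
          apply mul_le_mul_of_nonneg_left (Real.sin_sq_le_one _)
            (rpow_nonneg (by norm_num) _)
      _ = ((2:ℝ)^(-2*α))^M * ((2:ℝ)^(-2*α))^n := by rw [mul_one, h1]
  have hMK : M + (K - M) = K := Nat.add_sub_cancel' hKM
  have hle : f (K - M) ≤ ∑' n, f n := Summable.le_tsum hsummable _ (fun j _ => hpos j)
  refine le_trans ?_ hle
  rw [hf]
  simp only [hMK]
  have hπ := Real.pi_pos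
  have h2K : (0:ℝ) < (2:ℝ)^K := by positivity
  have h2Ku : (2:ℝ)^K * u < 1 := by
    have : (2:ℝ) ^ (-(K:ℝ)) = ((2:ℝ)^K)⁻¹ := by
      rw [Real.rpow_neg (by norm_num), Real.rpow_natCast]
    rw [this] at hK₂
    calc (2:ℝ)^K * u < (2:ℝ)^K * ((2:ℝ)^K)⁻¹ := by
          exact mul_lt_mul_of_pos_left hK₂ h2K
      _ = 1 := mul_inv_cancel₀ h2K.ne'
  have hx0 : (0:ℝ) ≤ (2:ℝ)^K * π * u / 2 := by positivity
  have hx1 : (2:ℝ)^K * π * u / 2 ≤ π / 2 := by nlinarith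
  have hsin : (2:ℝ)^K * u ≤ Real.sin ((2:ℝ)^K * π * u / 2) := by
    have h := Real.mul_le_sin hx0 hx1
    have hπ' : π ≠ 0 := hπ.ne'
    calc (2:ℝ)^K * u = 2 / π * ((2:ℝ)^K * π * u / 2) := by field_simp
      _ ≤ _ := h
  have hsinsq : ((2:ℝ)^K * u)^2 ≤ Real.sin ((2:ℝ)^K * π * u / 2) ^ 2 :=
    pow_le_pow_left₀ (by positivity) hsin 2
  have key : (4:ℝ)^(α-1) * u^(2*α) ≤ (2:ℝ)^(-2*(K:ℝ)*α) * ((2:ℝ)^K * u)^2 := by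
    have h2u : (2:ℝ)^(-(K:ℝ)) ≤ 2 * u := by
      have : (2:ℝ)^(-((K:ℝ)+1)) * 2 = (2:ℝ)^(-(K:ℝ)) := by
        rw [← Real.rpow_add_one (by norm_num : (2:ℝ) ≠ 0)]
        ring_nf
      nlinarith
    have hinv : ((2:ℝ)*u)⁻¹ ≤ (2:ℝ)^(K:ℝ) := by
      rw [inv_le_iff_one_le_mul₀ (by positivity)]
      have : (2:ℝ)^(-(K:ℝ)) * (2:ℝ)^(K:ℝ) = 1 := by
        rw [← Real.rpow_add (by norm_num)]; simp
      nlinarith [Real.rpow_pos_of_pos (by norm_num : (0:ℝ) < 2) (K:ℝ)]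
    have hexp : (0:ℝ) ≤ 2 - 2*α := by linarith
    have hmain : (((2:ℝ)*u)⁻¹)^(2-2*α) ≤ ((2:ℝ)^(K:ℝ))^(2-2*α) :=
      Real.rpow_le_rpow (by positivity) hinv hexp
    have h22 : (2:ℝ)^(2:ℝ) = 4 := by rw [Real.rpow_two]; norm_num
    have hL : (((2:ℝ)*u)⁻¹)^(2-2*α) = (4:ℝ)^(α-1) * u^(2*α) / u^(2:ℝ) := by
      rw [Real.inv_rpow (by positivity), ← Real.rpow_neg (by positivity),
        Real.mul_rpow (by norm_num) hu0.le,
        show (4:ℝ)^(α-1) = (2:ℝ)^(2*α-2) by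
          rw [← h22, ← Real.rpow_mul (by norm_num)]; ring_nf,
        mul_div_assoc, ← Real.rpow_sub hu0]
      ring_nf
    have hR : ((2:ℝ)^(K:ℝ))^(2-2*α) = (2:ℝ)^(-2*(K:ℝ)*α) * ((2:ℝ)^(K:ℝ))^(2:ℝ) := by
      rw [← Real.rpow_mul (by norm_num), ← Real.rpow_mul (by norm_num),
        ← Real.rpow_add (by norm_num)]
      ring_nf
    rw [hL, hR] at hmain
    have hu2 : (0:ℝ) < u^(2:ℝ) := Real.rpow_pos_of_pos hu0 _
    rw [div_le_iff₀ hu2] at hmain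
    calc (4:ℝ)^(α-1) * u^(2*α)
        ≤ (2:ℝ)^(-2*(K:ℝ)*α) * ((2:ℝ)^(K:ℝ))^(2:ℝ) * u^(2:ℝ) := hmain
      _ = (2:ℝ)^(-2*(K:ℝ)*α) * ((2:ℝ)^K * u)^2 := by
          rw [mul_pow, mul_assoc, Real.rpow_two, Real.rpow_two, Real.rpow_natCast]
  calc (4:ℝ)^(α-1) * u^(2*α) ≤ (2:ℝ)^(-2*(K:ℝ)*α) * ((2:ℝ)^K * u)^2 := key
    _ ≤ (2:ℝ)^(-2*(K:ℝ)*α) * Real.sin ((2:ℝ)^K * π * u / 2) ^ 2 :=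
        mul_le_mul_of_nonneg_left hsinsq (rpow_nonneg (by norm_num) _)
end

section
/- Let Z be a real random variable and I a nonnegative random variable on a probability space such that, conditionally on I, Z is centered Gaussian with variance I, and suppose there are constants c₁, c₂, θ > 0 with P(I > r) ≥ c₁ exp(−c₂ r^θ) for all large r. Then for every λ > 0 large, P(|Z| > λ) ≥ C₁ exp(−C₂ λ^{2θ/(1+θ)}) for some constants C₁, C₂ > 0 depending only on c₁, c₂, θ. -/
open Real MeasureTheory ProbabilityTheory

lemma gauss_tail_lb (a : ℝ) (ha : 0 ≤ a) :
    ENNReal.ofReal ((Real.sqrt (2 * π))⁻¹ * Real.exp (-(a + 1) ^ 2 / 2)) ≤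
      gaussianReal 0 1 {x | a < |x|} := by
  have hsub : Set.Ioc a (a + 1) ⊆ {x | a < |x|} := by
    intro x hx
    simp only [Set.mem_setOf_eq]
    rw [abs_of_pos (lt_of_le_of_lt ha hx.1)]; exact hx.1
  refine le_trans ?_ (measure_mono hsub)
  rw [gaussianReal_apply 0 one_ne_zero]
  calc ENNReal.ofReal ((Real.sqrt (2 * π))⁻¹ * Real.exp (-(a + 1) ^ 2 / 2))
      = ∫⁻ _ in Set.Ioc a (a + 1),
          ENNReal.ofReal ((Real.sqrt (2 * π))⁻¹ * Real.exp (-(a + 1) ^ 2 / 2)) := by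
        rw [setLIntegral_const, Real.volume_Ioc]
        simp
    _ ≤ ∫⁻ x in Set.Ioc a (a + 1), gaussianPDF 0 1 x := by
        refine setLIntegral_mono (measurable_gaussianPDF 0 1) fun x hx => ?_
        unfold gaussianPDF gaussianPDFReal
        refine ENNReal.ofReal_le_ofReal ?_
        have hx0 : 0 ≤ x := le_trans ha hx.1.le
        have hx1 : x ≤ a + 1 := hx.2
        have hsq : x ^ 2 ≤ (a + 1) ^ 2 := by nlinarith
        simp only [NNReal.coe_one, mul_one, sub_zero]
        gcongr

theorem conditional_gaussian_lower_tail
    {Ω : Type*} [MeasureSpace Ω] [IsProbabilityMeasure (ℙ : Measure Ω)]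
    (I N : Ω → ℝ) (hImeas : Measurable I) (hInonneg : ∀ ω, 0 ≤ I ω)
    (hNmeas : Measurable N) (hN : Measure.map N ℙ = gaussianReal 0 1)
    (hindep : IndepFun I N ℙ)
    (c₁ c₂ θ : ℝ) (hc₁ : 0 < c₁) (hc₂ : 0 < c₂) (hθ : 0 < θ)
    (r₀ : ℝ)
    (htail : ∀ r ≥ r₀, c₁ * Real.exp (-c₂ * r ^ θ) ≤ (ℙ {ω | r < I ω}).toReal) :
    ∃ C₁ > 0, ∃ C₂ > 0, ∃ lam₀ : ℝ, ∀ lam ≥ lam₀,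
      C₁ * Real.exp (-C₂ * lam ^ (2 * θ / (1 + θ))) ≤
        (ℙ {ω | lam < |Real.sqrt (I ω) * N ω|}).toReal := by
  have hθ1 : (0:ℝ) < 1 + θ := by linarith
  have hne : (1 + θ) ≠ 0 := ne_of_gt hθ1
  refine ⟨c₁ * (Real.sqrt (2 * π))⁻¹ * Real.exp (-1), by positivity, c₂ + 1, by linarith,
    max 1 ((max r₀ 1) ^ ((1 + θ) / 2)), fun lam hlam => ?_⟩
  have hlam1 : (1:ℝ) ≤ lam := le_trans (le_max_left _ _) hlam
  have hlam0 : (0:ℝ) < lam := lt_of_lt_of_le one_pos hlam1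
  set r : ℝ := lam ^ (2 / (1 + θ)) with hrdef
  set a : ℝ := lam ^ (θ / (1 + θ)) with hadef
  set s : ℝ := lam ^ (2 * θ / (1 + θ)) with hsdef
  have ha0 : 0 ≤ a := Real.rpow_nonneg hlam0.le _
  have hr0 : 0 < r := Real.rpow_pos_of_pos hlam0 _
  -- r ≥ r₀
  have hrr₀ : r₀ ≤ r := by
    have h1 : (max r₀ 1) ^ ((1 + θ) / 2) ≤ lam := le_trans (le_max_right _ _) hlam
    have hM0 : (0:ℝ) ≤ max r₀ 1 := le_trans zero_le_one (le_max_right _ _)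
    have h2 : ((max r₀ 1) ^ ((1 + θ) / 2)) ^ (2 / (1 + θ)) ≤ r := by
      apply Real.rpow_le_rpow (Real.rpow_nonneg hM0 _) h1
      positivity
    rw [← Real.rpow_mul hM0] at h2
    have he : (1 + θ) / 2 * (2 / (1 + θ)) = 1 := by field_simp
    rw [he, Real.rpow_one] at h2
    exact le_trans (le_max_left _ _) h2
  -- exponent identities
  have hrθ : r ^ θ = s := by
    rw [hrdef, hsdef, ← Real.rpow_mul hlam0.le]
    congr 1
    ring
  have ha2 : a * a = s := by
    rw [hadef, hsdef, ← Real.rpow_add hlam0]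
    congr 1
    ring
  have hsa : Real.sqrt r * a = lam := by
    rw [Real.sqrt_eq_rpow, hrdef, hadef, ← Real.rpow_mul hlam0.le, ← Real.rpow_add hlam0]
    have he : 2 / (1 + θ) * (1 / 2) + θ / (1 + θ) = 1 := by field_simp
    rw [he, Real.rpow_one]
  -- the two events
  have hT : MeasurableSet {x : ℝ | a < |x|} := measurableSet_lt measurable_const measurable_abs
  have hmul : ℙ (I ⁻¹' Set.Ioi r ∩ N ⁻¹' {x | a < |x|})
      = ℙ (I ⁻¹' Set.Ioi r) * ℙ (N ⁻¹' {x | a < |x|}) :=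
    hindep.measure_inter_preimage_eq_mul _ _ measurableSet_Ioi hT
  have hsub : I ⁻¹' Set.Ioi r ∩ N ⁻¹' {x | a < |x|}
      ⊆ {ω | lam < |Real.sqrt (I ω) * N ω|} := by
    rintro ω ⟨hI, hNω⟩
    simp only [Set.mem_preimage, Set.mem_Ioi, Set.mem_setOf_eq] at *
    rw [abs_mul, abs_of_nonneg (Real.sqrt_nonneg _)]
    calc lam = Real.sqrt r * a := hsa.symm
      _ < Real.sqrt (I ω) * |N ω| :=
        mul_lt_mul'' (Real.sqrt_lt_sqrt hr0.le hI) hNω (Real.sqrt_nonneg r) ha0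
  -- lower bound for the N part
  have hPB : (Real.sqrt (2 * π))⁻¹ * Real.exp (-(s + 1))
      ≤ (ℙ (N ⁻¹' {x | a < |x|})).toReal := by
    have h1 : ℙ (N ⁻¹' {x | a < |x|}) = gaussianReal 0 1 {x | a < |x|} := by
      rw [← hN, Measure.map_apply hNmeas hT]
    have h2 := gauss_tail_lb a ha0
    rw [← h1] at h2
    have h3 := (ENNReal.ofReal_le_iff_le_toReal (measure_ne_top _ _)).mp h2
    refine le_trans ?_ h3
    gcongr
    nlinarith [ha2, sq_nonneg (a - 1)]
  -- lower bound for the I part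
  have hPA : c₁ * Real.exp (-c₂ * s) ≤ (ℙ (I ⁻¹' Set.Ioi r)).toReal := by
    have := htail r hrr₀
    rw [hrθ] at this
    convert this using 3
    ext ω; simp
  -- combine
  have key : c₁ * (Real.sqrt (2 * π))⁻¹ * Real.exp (-1) * Real.exp (-(c₂ + 1) * s)
      = (c₁ * Real.exp (-c₂ * s)) * ((Real.sqrt (2 * π))⁻¹ * Real.exp (-(s + 1))) := by
    have h : Real.exp (-1) * Real.exp (-(c₂ + 1) * s)
        = Real.exp (-c₂ * s) * Real.exp (-(s + 1)) := by
      rw [← Real.exp_add, ← Real.exp_add]; ring_nf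
    linear_combination (c₁ * (Real.sqrt (2 * π))⁻¹) * h
  calc c₁ * (Real.sqrt (2 * π))⁻¹ * Real.exp (-1) * Real.exp (-(c₂ + 1) * s)
      = (c₁ * Real.exp (-c₂ * s)) * ((Real.sqrt (2 * π))⁻¹ * Real.exp (-(s + 1))) := key
    _ ≤ (ℙ (I ⁻¹' Set.Ioi r)).toReal * (ℙ (N ⁻¹' {x | a < |x|})).toReal := by
        apply mul_le_mul hPA hPB (by positivity) ENNReal.toReal_nonneg
    _ = (ℙ (I ⁻¹' Set.Ioi r ∩ N ⁻¹' {x | a < |x|})).toReal := by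
        rw [hmul, ENNReal.toReal_mul]
    _ ≤ (ℙ {ω | lam < |Real.sqrt (I ω) * N ω|}).toReal :=
        ENNReal.toReal_mono (measure_ne_top _ _) (measure_mono hsub)
end
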